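/- For every k ∈ {1,…,n−2}, every k' ∈ {k+1,…,n−1}, every ε ∈ (0,1) and every δ ∈ (0,1): if Δ(ε;k,δ) > 1 − n(b−c)/((n−1)·b), then V_k(ε,δ) > W_{k'}(ε,δ). That is, whenever the incumbent tolerant cooperative strategy T_k strictly beats the defector, it also strictly beats every less tolerant conditional cooperator mutant T_{k'} with k' > k. -/

import Mathlib

/-! Since the number of mistakes among the other `n - 1` players is binomial with mean
`(n - 1)ε`, the one-shot payoffs are `F_C = (1 - ε)(b - c)` and `F_D = (1 - ε)(n - 1)b/n`,
and the hypothesis on `Δ` says exactly that `W_n < V_k`. Write `V_k = F_C/(B - P)` and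
`W_n = F_D/B`, where `P = δ(1 - ε)ψ(n-1, n-k-1, ε) > 0`. The denominator of `W_{k'}` is
`B + e` with `e = δ·Σ_{n-k' ≤ q ≤ n-k-2} ψ(n-1, q, ε) ≥ 0`, so
`W_{k'} = (V_k(B - P) + e·W_n)/(B + e)` is a combination of `V_k` and `W_n` with weights
summing to less than one, hence below `V_k`. -/

open Finset

/-- `ψ(j,q,ε) = (j choose q)·ε^q·(1−ε)^(j−q)`. -/
noncomputable def psi (j q : ℕ) (ε : ℝ) : ℝ :=
  (j.choose q : ℝ) * ε ^ q * (1 - ε) ^ (j - q)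

/-- One-shot expected payoff of cooperation against `n−1` error-prone cooperators. -/
noncomputable def FC (n : ℕ) (b c ε : ℝ) : ℝ :=
  (1 - ε) * ∑ q ∈ range n, psi (n - 1) q ε * (b * ((n : ℝ) - q) / n - c) +
    ε * ∑ q ∈ range n, psi (n - 1) q ε * (b * ((n : ℝ) - 1 - q) / n)

/-- One-shot expected payoff of defection against `n−1` error-prone cooperators. -/
noncomputable def FD (n : ℕ) (b ε : ℝ) : ℝ :=
  ∑ q ∈ range n, psi (n - 1) q ε * (b * ((n : ℝ) - 1 - q) / n)

/-- Repeated-game payoff of the incumbent `T_k` strategy in a `T_k` population. -/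
noncomputable def Vk (n k : ℕ) (b c ε δ : ℝ) : ℝ :=
  FC n b c ε /
    (1 - δ * ∑ q ∈ range (n - k - 1), psi (n - 1) q ε -
      δ * (1 - ε) * psi (n - 1) (n - k - 1) ε)

/-- Repeated-game payoff of a single defector (`T_n`) mutant in a `T_k` population. -/
noncomputable def Wn (n k : ℕ) (b ε δ : ℝ) : ℝ :=
  FD n b ε / (1 - δ * ∑ q ∈ range (n - k - 1), psi (n - 1) q ε)

/-- Repeated-game payoff of a single less tolerant `T_{k'}` mutant (`k < k' ≤ n−1`)
in a `T_k` population. -/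
noncomputable def Wk' (n k k' : ℕ) (b c ε δ : ℝ) : ℝ :=
  (FC n b c ε +
      δ * (∑ q ∈ Icc (n - k') (n - k - 2), psi (n - 1) q ε) * Wn n k b ε δ) /
    (1 - δ * ∑ q ∈ range (n - k'), psi (n - 1) q ε)

/-- The continuation factor `Δ(ε;k,δ)`. -/
noncomputable def Delta (n k : ℕ) (ε δ : ℝ) : ℝ :=
  δ * (1 - ε) * psi (n - 1) (n - k - 1) ε /
    (1 - δ * ∑ q ∈ range (n - k - 1), psi (n - 1) q ε)

open Polynomial in
lemma psi_eq_eval_bernsteinPolynomial (j q : ℕ) (ε : ℝ) :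
    psi j q ε = (bernsteinPolynomial ℝ j q).eval ε := by
  simp [psi, bernsteinPolynomial]

lemma sum_psi (j : ℕ) (ε : ℝ) : ∑ q ∈ range (j + 1), psi j q ε = 1 := by
  simpa [psi_eq_eval_bernsteinPolynomial, Polynomial.eval_finsetSum] using
    congrArg (Polynomial.eval ε) (bernsteinPolynomial.sum ℝ j)

lemma sum_natCast_mul_psi (j : ℕ) (ε : ℝ) :
    ∑ q ∈ range (j + 1), (q : ℝ) * psi j q ε = j * ε := by
  simpa [psi_eq_eval_bernsteinPolynomial, Polynomial.eval_finsetSum, nsmul_eq_mul] using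
    congrArg (Polynomial.eval ε) (bernsteinPolynomial.sum_smul ℝ j)

lemma sum_psi_mul_affine (j : ℕ) (ε a t : ℝ) :
    ∑ q ∈ range (j + 1), psi j q ε * (a + t * q) = a + t * (j * ε) := by
  have h : ∀ q ∈ range (j + 1),
      psi j q ε * (a + t * q) = a * psi j q ε + t * (q * psi j q ε) := fun q _ => by ring
  rw [sum_congr rfl h, sum_add_distrib, ← mul_sum, ← mul_sum, sum_psi, sum_natCast_mul_psi,
    mul_one]

lemma psi_nonneg (j q : ℕ) {ε : ℝ} (h0 : 0 ≤ ε) (h1 : ε ≤ 1) : 0 ≤ psi j q ε := by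
  have : 0 ≤ 1 - ε := by linarith
  unfold psi
  positivity

lemma psi_pos {j q : ℕ} (hq : q ≤ j) {ε : ℝ} (h0 : 0 < ε) (h1 : ε < 1) : 0 < psi j q ε := by
  have : 0 < 1 - ε := by linarith
  have : 0 < (j.choose q : ℝ) := by exact_mod_cast Nat.choose_pos hq
  unfold psi
  positivity

lemma sum_range_psi_le_one {j a : ℕ} (ha : a ≤ j + 1) {ε : ℝ} (h0 : 0 ≤ ε) (h1 : ε ≤ 1) :
    ∑ q ∈ range a, psi j q ε ≤ 1 :=
  sum_psi j ε ▸ sum_le_sum_of_subset_of_nonneg (range_subset_range.mpr ha)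
    fun q _ _ => psi_nonneg j q h0 h1

lemma mul_psi_lt_one_sub_mul_sum_range_psi {j m : ℕ} (hm : m ≤ j) {δ ε : ℝ} (hδ0 : 0 ≤ δ)
    (hδ1 : δ < 1) (hε0 : 0 ≤ ε) (hε1 : ε ≤ 1) :
    δ * (1 - ε) * psi j m ε < 1 - δ * ∑ q ∈ range m, psi j q ε := by
  have hψ := psi_nonneg j m hε0 hε1
  have hS : δ * ∑ q ∈ range (m + 1), psi j q ε < 1 :=
    (mul_le_of_le_one_right hδ0 (sum_range_psi_le_one (by omega) hε0 hε1)).trans_lt hδ1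
  rw [sum_range_succ, mul_add] at hS
  nlinarith [mul_nonneg hδ0 hψ]

lemma FC_eq {n : ℕ} (hn : 1 ≤ n) (b c ε : ℝ) : FC n b c ε = (1 - ε) * (b - c) := by
  obtain ⟨j, rfl⟩ : ∃ j, n = j + 1 := ⟨n - 1, by omega⟩
  have hj : (j : ℝ) + 1 ≠ 0 := by positivity
  have hC : ∀ q : ℕ, b * (((j + 1 : ℕ) : ℝ) - q) / (j + 1 : ℕ) - c
      = (b - c) + -(b / (j + 1)) * q := fun q => by push_cast; field_simp; ring
  have hD : ∀ q : ℕ, b * (((j + 1 : ℕ) : ℝ) - 1 - q) / (j + 1 : ℕ)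
      = b * j / (j + 1) + -(b / (j + 1)) * q := fun q => by push_cast; field_simp; ring
  simp only [FC, Nat.add_sub_cancel, hC, hD, sum_psi_mul_affine]
  field_simp
  ring

lemma FD_eq {n : ℕ} (hn : 1 ≤ n) (b ε : ℝ) : FD n b ε = (1 - ε) * ((n - 1) * b / n) := by
  obtain ⟨j, rfl⟩ : ∃ j, n = j + 1 := ⟨n - 1, by omega⟩
  have hj : (j : ℝ) + 1 ≠ 0 := by positivity
  have hD : ∀ q : ℕ, b * (((j + 1 : ℕ) : ℝ) - 1 - q) / (j + 1 : ℕ)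
      = b * j / (j + 1) + -(b / (j + 1)) * q := fun q => by push_cast; field_simp; ring
  simp only [FD, Nat.add_sub_cancel, hD, sum_psi_mul_affine]
  push_cast
  field_simp
  ring

lemma FC_div_FD {n : ℕ} (hn : 1 ≤ n) (b c : ℝ) {ε : ℝ} (hε : ε ≠ 1) :
    FC n b c ε / FD n b ε = n * (b - c) / ((n - 1) * b) := by
  rw [FC_eq hn, FD_eq hn, mul_div_mul_left _ _ (sub_ne_zero.mpr hε.symm), div_div_eq_mul_div,
    mul_comm]

lemma FD_pos {n : ℕ} (hn : 2 ≤ n) {b ε : ℝ} (hb : 0 < b) (hε : ε < 1) : 0 < FD n b ε := by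
  have : (1 : ℝ) < n := by exact_mod_cast hn
  have : 0 < 1 - ε := sub_pos.mpr hε
  rw [FD_eq (by omega)]
  positivity

lemma div_lt_div_sub_of_one_sub_div_lt {F G B P : ℝ} (hG : 0 < G) (hPB : P < B) (hB : 0 < B)
    (h : 1 - F / G < P / B) : G / B < F / (B - P) := by
  have h' : (B - P) / B < F / G := by rw [sub_div, div_self hB.ne']; linarith
  rw [div_lt_div_iff₀ hB hG] at h'
  rw [div_lt_div_iff₀ hB (sub_pos.mpr hPB)]
  linarith

lemma add_mul_div_add_lt_div_sub {F B P e w : ℝ} (hP : 0 < P) (hPB : P < B) (he : 0 ≤ e)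
    (hw : 0 ≤ w) (hwV : w < F / (B - P)) : (F + e * w) / (B + e) < F / (B - P) := by
  set V := F / (B - P)
  have hF : F = V * (B - P) := (div_mul_cancel₀ F (sub_pos.mpr hPB).ne').symm
  rw [div_lt_iff₀ (by linarith), hF]
  nlinarith [mul_pos (hw.trans_lt hwV) hP, mul_le_mul_of_nonneg_left hwV.le he]

theorem Vk_beats_harder_mutants_general (n : ℕ) (hn : 3 ≤ n) (b c : ℝ)
    (hb0 : 0 < b / n)
    (k : ℕ) (hk2 : k ≤ n - 2)
    (k' : ℕ) (hk'1 : k + 1 ≤ k')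
    (ε : ℝ) (hε0 : 0 < ε) (hε1 : ε < 1)
    (δ : ℝ) (hδ0 : 0 < δ) (hδ1 : δ < 1)
    (h : Delta n k ε δ > 1 - n * (b - c) / (((n : ℝ) - 1) * b)) :
    Vk n k b c ε δ > Wk' n k k' b c ε δ := by
  have hb : 0 < b := (div_pos_iff_of_pos_right (by positivity)).mp hb0
  have hP : 0 < δ * (1 - ε) * psi (n - 1) (n - k - 1) ε :=
    mul_pos (mul_pos hδ0 (sub_pos.mpr hε1)) (psi_pos (by omega) hε0 hε1)
  have hPB := mul_psi_lt_one_sub_mul_sum_range_psi (j := n - 1) (m := n - k - 1) (by omega)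
    hδ0.le hδ1 hε0.le hε1.le
  have hFD := FD_pos (n := n) (by omega) hb hε1
  have hWn : Wn n k b ε δ < Vk n k b c ε δ := by
    rw [← FC_div_FD (by omega) b c hε1.ne] at h
    exact div_lt_div_sub_of_one_sub_div_lt hFD hPB (hP.trans hPB) h
  have hD : 1 - δ * ∑ q ∈ range (n - k'), psi (n - 1) q ε =
      1 - δ * ∑ q ∈ range (n - k - 1), psi (n - 1) q ε +
        δ * ∑ q ∈ Icc (n - k') (n - k - 2), psi (n - 1) q ε := by
    rw [← Ico_add_one_right_eq_Icc, show n - k - 2 + 1 = n - k - 1 by omega,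
      ← sum_range_add_sum_Ico _ (show n - k' ≤ n - k - 1 by omega)]
    ring
  rw [gt_iff_lt, Wk', hD]
  exact add_mul_div_add_lt_div_sub hP hPB
    (mul_nonneg hδ0.le (sum_nonneg fun q _ => psi_nonneg _ _ hε0.le hε1.le))
    (div_nonneg hFD.le (hP.trans hPB).le) hWn

/-- For every `k ∈ {1,…,n−2}`, `k' ∈ {k+1,…,n−1}`, `ε ∈ (0,1)`, `δ ∈ (0,1)`:
if `Δ(ε;k,δ) > 1 − n(b−c)/((n−1)b)` then `V_k(ε,δ) > W_{k'}(ε,δ)`.  Whenever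
the incumbent tolerant strategy `T_k` strictly beats the defector, it also
strictly beats every less tolerant conditional cooperator mutant. -/
theorem Vk_beats_harder_mutants (n : ℕ) (hn : 3 ≤ n) (b c : ℝ)
    (hb0 : 0 < b / n) (hbc : b / n < c) (hcb : c < b)
    (k : ℕ) (hk1 : 1 ≤ k) (hk2 : k ≤ n - 2)
    (k' : ℕ) (hk'1 : k + 1 ≤ k') (hk'2 : k' ≤ n - 1)
    (ε : ℝ) (hε0 : 0 < ε) (hε1 : ε < 1)
    (δ : ℝ) (hδ0 : 0 < δ) (hδ1 : δ < 1)
    (h : Delta n k ε δ > 1 - n * (b - c) / (((n : ℝ) - 1) * b)) :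
    Vk n k b c ε δ > Wk' n k k' b c ε δ :=
  Vk_beats_harder_mutants_general n hn b c hb0 k hk2 k' hk'1 ε hε0 hε1 δ hδ0 hδ1 h
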